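/- arXiv:2107.00228 — 2 statements merged into one kernel-verified Lean document; each statement's English description precedes it below -/
import Mathlib

section
/- Let σ > 0, let x, δ ∈ ℝ^m, let a ∈ ℝ, and let A ⊆ ℝ^m be measurable. If the isotropic Gaussian measure N(x, σ²I) satisfies N(x, σ²I)(A) ≥ Φ(a), then the shifted measure satisfies N(x + δ, σ²I)(A) ≥ Φ(a − ‖δ‖₂/σ). -/
open MeasureTheory ProbabilityTheory

/-- The standard Gaussian CDF `Φ`. -/
noncomputable def Phi (a : ℝ) : ℝ := ((gaussianReal 0 1) (Set.Iic a)).toReal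

/-- The isotropic Gaussian measure `N(x, σ²I)` on `ℝ^m`. -/
noncomputable def gaussPi (m : ℕ) (σ : ℝ) (x : EuclideanSpace ℝ (Fin m)) :
    Measure (EuclideanSpace ℝ (Fin m)) :=
  (Measure.pi fun i => gaussianReal (x i) ⟨σ ^ 2, sq_nonneg σ⟩).map
    (MeasurableEquiv.toLp 2 (Fin m → ℝ))

/-! The likelihood ratio of `N(x + δ, σ²I)` with respect to `N(x, σ²I)` is
`y ↦ exp ((⟪δ, y - x⟫ - ‖δ‖² / 2) / σ²)`, an increasing function of `⟪δ, y⟫`. Hence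
(Neyman–Pearson) among the sets of `N(x, σ²I)`-measure at least `Φ(a)`, the half-space
`H = {⟪δ, y⟫ ≤ s}` of measure exactly `Φ(a)` has the least `N(x + δ, σ²I)`-measure: passing from
`H` to `A` trades the `N(x, σ²I)`-mass of `H \ A`, where the ratio is at most its value `t` on the
boundary of `H`, for the no smaller mass of `A \ H`, where it is at least `t`. Under both measures
`⟪δ, ·⟫` is Gaussian with variance `σ²‖δ‖²`, and the means differ by `‖δ‖²`; so `H` has shifted
measure `Φ(a - ‖δ‖ / σ)`. -/

open scoped NNReal ENNReal RealInnerProductSpace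

theorem MeasureTheory.withDensity_setOf_le_le_of_monotone {α : Type*} [MeasurableSpace α]
    {μ : Measure α} [IsFiniteMeasure μ] {φ : α → ℝ} (hφ : Measurable φ) {g : ℝ → ℝ≥0∞}
    (hg : Monotone g) (s : ℝ) {A : Set α} (hA : MeasurableSet A) (hμ : μ {y | φ y ≤ s} ≤ μ A) :
    μ.withDensity (g ∘ φ) {y | φ y ≤ s} ≤ μ.withDensity (g ∘ φ) A := by
  set H := {y | φ y ≤ s}
  have hH : MeasurableSet H := measurableSet_le hφ measurable_const
  have hdiff : μ (H \ A) ≤ μ (A \ H) := by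
    rw [← measure_inter_add_sdiff H hA, ← measure_inter_add_sdiff A hH, Set.inter_comm A H] at hμ
    exact (ENNReal.add_le_add_iff_left (measure_ne_top _ _)).1 hμ
  rw [withDensity_apply _ hH, withDensity_apply _ hA, ← lintegral_inter_add_sdiff _ H hA,
    ← lintegral_inter_add_sdiff _ A hH, Set.inter_comm A H]
  refine add_le_add le_rfl ?_
  calc ∫⁻ y in H \ A, g (φ y) ∂μ
      ≤ ∫⁻ _ in H \ A, g s ∂μ := setLIntegral_mono measurable_const fun y hy => hg hy.1
    _ = g s * μ (H \ A) := setLIntegral_const _ _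
    _ ≤ g s * μ (A \ H) := by gcongr
    _ = ∫⁻ _ in A \ H, g s ∂μ := (setLIntegral_const _ _).symm
    _ ≤ ∫⁻ y in A \ H, g (φ y) ∂μ :=
        setLIntegral_mono (hg.measurable.comp hφ) fun y hy => hg (not_le.1 hy.2).le

lemma MeasurableEquiv.map_withDensity_comp {α β : Type*} [MeasurableSpace α] [MeasurableSpace β]
    (e : α ≃ᵐ β) (μ : Measure α) (f : β → ℝ≥0∞) :
    (μ.withDensity (f ∘ e)).map e = (μ.map e).withDensity f := by
  ext s hs
  rw [e.map_apply, withDensity_apply _ hs, withDensity_apply _ (e.measurable hs), e.restrict_map,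
    lintegral_map_equiv]
  rfl

lemma MeasureTheory.Measure.pi_withDensity {ι : Type*} [Fintype ι] {α : ι → Type*}
    [∀ i, MeasurableSpace (α i)] (μ ν : ∀ i, Measure (α i)) [∀ i, IsProbabilityMeasure (μ i)]
    [∀ i, SigmaFinite (ν i)]
    (f : ∀ i, α i → ℝ≥0∞) (hf : ∀ i, Measurable (f i))
    (h : ∀ i, ν i = (μ i).withDensity (f i)) :
    Measure.pi ν = (Measure.pi μ).withDensity fun y => ∏ i, f i (y i) := by
  refine Measure.pi_eq fun s hs => ?_
  have hind : (Set.univ.pi s).indicator (fun y => ∏ i, f i (y i))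
      = fun y => ∏ i, (s i).indicator (f i) (y i) := by
    funext y
    by_cases hy : ∀ i, y i ∈ s i
    · simp [Set.indicator, hy]
    · obtain ⟨i, hi⟩ := not_forall.1 hy
      rw [Set.indicator_of_notMem (by simpa using hy)]
      exact (Finset.prod_eq_zero (Finset.mem_univ i) (Set.indicator_of_notMem hi _)).symm
  rw [withDensity_apply _ (.univ_pi hs), ← lintegral_indicator (.univ_pi hs), hind,
    lintegral_prod_eq_prod_lintegral_of_indepFun _ _
      (iIndepFun_pi fun i => ((hf i).indicator (hs i)).aemeasurable)
      fun i => ((hf i).indicator (hs i)).comp (measurable_pi_apply i)]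
  refine Finset.prod_congr rfl fun i _ => ?_
  rw [h i, withDensity_apply _ (hs i), ← lintegral_indicator (hs i),
    ← (measurePreserving_eval μ i).lintegral_comp ((hf i).indicator (hs i))]

lemma ofReal_Phi (a : ℝ) : ENNReal.ofReal (Phi a) = gaussianReal 0 1 (Set.Iic a) :=
  ENNReal.ofReal_toReal (measure_ne_top _ _)

lemma gaussianReal_map_affine (c σ : ℝ) :
    (gaussianReal 0 1).map (fun z => c + σ * z) = gaussianReal c ⟨σ ^ 2, sq_nonneg σ⟩ := by
  change (gaussianReal 0 1).map ((c + ·) ∘ (σ * ·)) = _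
  rw [← Measure.map_map (by fun_prop) (by fun_prop), gaussianReal_map_const_mul,
    gaussianReal_map_const_add]
  congr 1
  · simp
  · exact mul_one _

lemma gaussianReal_add_eq_withDensity (c d : ℝ) {v : ℝ≥0} (hv : v ≠ 0) :
    gaussianReal (c + d) v = (gaussianReal c v).withDensity
      (fun y => ENNReal.ofReal (Real.exp ((d * (y - c) - d ^ 2 / 2) / v))) := by
  rw [gaussianReal_of_var_ne_zero _ hv, gaussianReal_of_var_ne_zero _ hv,
    ← withDensity_mul _ (measurable_gaussianPDF _ _) (by fun_prop)]
  congr 1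
  funext y
  rw [Pi.mul_apply, gaussianPDF, gaussianPDF, ← ENNReal.ofReal_mul (gaussianPDFReal_nonneg _ _ _),
    gaussianPDFReal, gaussianPDFReal, mul_assoc _ (Real.exp _), ← Real.exp_add]
  congr 3
  field_simp
  ring

section StdGaussian

variable {E : Type*} [NormedAddCommGroup E] [InnerProductSpace ℝ E] [FiniteDimensional ℝ E]
  [MeasurableSpace E] [BorelSpace E]

lemma stdGaussian_map_inner (w : E) :
    (stdGaussian E).map (fun z => ⟪w, z⟫) = gaussianReal 0 (‖w‖₊ ^ 2) := by
  have h := IsGaussian.map_eq_gaussianReal (μ := stdGaussian E) (innerSL ℝ w)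
  rw [integral_strongDual_stdGaussian, variance_dual_stdGaussian, innerSL_apply_norm] at h
  convert h using 2
  · ext; simp
  · ext; simp

lemma stdGaussian_setOf_inner_le {w : E} (hw : w ≠ 0) (t : ℝ) :
    stdGaussian E {z | ⟪w, z⟫ ≤ t} = ENNReal.ofReal (Phi (t / ‖w‖)) := by
  have hw' : 0 < ‖w‖ := norm_pos_iff.2 hw
  have hscale : (gaussianReal 0 1).map (‖w‖ * ·) = gaussianReal 0 (‖w‖₊ ^ 2) := by
    rw [gaussianReal_map_const_mul]
    congr 1
    · simp
    · ext; simp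
  change stdGaussian E ((fun z => ⟪w, z⟫) ⁻¹' Set.Iic t) = _
  rw [← Measure.map_apply (by fun_prop) measurableSet_Iic, stdGaussian_map_inner, ← hscale,
    Measure.map_apply (by fun_prop) measurableSet_Iic, ofReal_Phi]
  congr 1
  ext z
  simp [le_div_iff₀ hw', mul_comm]

end StdGaussian

lemma gaussPi_eq_map_stdGaussian (m : ℕ) (σ : ℝ) (x : EuclideanSpace ℝ (Fin m)) :
    gaussPi m σ x = (stdGaussian _).map (fun z => x + σ • z) := by
  rw [← map_pi_eq_stdGaussian, Measure.map_map (by fun_prop) (by fun_prop), gaussPi]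
  simp_rw [← gaussianReal_map_affine]
  rw [← Measure.pi_map_pi (fun _ => by fun_prop), Measure.map_map (by fun_prop) (by fun_prop)]
  rfl

instance isProbabilityMeasure_gaussPi (m : ℕ) (σ : ℝ) (x : EuclideanSpace ℝ (Fin m)) :
    IsProbabilityMeasure (gaussPi m σ x) := by
  rw [gaussPi_eq_map_stdGaussian]
  exact Measure.isProbabilityMeasure_map (by fun_prop)

lemma gaussPi_setOf_inner_le {m : ℕ} {σ : ℝ} (hσ : 0 < σ) (x : EuclideanSpace ℝ (Fin m))
    {w : EuclideanSpace ℝ (Fin m)} (hw : w ≠ 0) (s : ℝ) :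
    gaussPi m σ x {y | ⟪w, y⟫ ≤ s} = ENNReal.ofReal (Phi ((s - ⟪w, x⟫) / (σ * ‖w‖))) := by
  have hpre : (fun z => x + σ • z) ⁻¹' {y | ⟪w, y⟫ ≤ s} = {z | ⟪w, z⟫ ≤ (s - ⟪w, x⟫) / σ} := by
    ext z
    simp [inner_add_right, inner_smul_right, le_div_iff₀ hσ, mul_comm σ, le_sub_iff_add_le']
  rw [gaussPi_eq_map_stdGaussian, Measure.map_apply (by fun_prop)
    (measurableSet_le (by fun_prop) measurable_const), hpre, stdGaussian_setOf_inner_le hw, div_div]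

lemma gaussPi_add_eq_withDensity {m : ℕ} {σ : ℝ} (hσ : σ ≠ 0) (x δ : EuclideanSpace ℝ (Fin m)) :
    gaussPi m σ (x + δ) = (gaussPi m σ x).withDensity
      (fun y => ENNReal.ofReal (Real.exp ((⟪δ, y⟫ - ⟪δ, x⟫ - ‖δ‖ ^ 2 / 2) / σ ^ 2))) := by
  let v : ℝ≥0 := ⟨σ ^ 2, sq_nonneg σ⟩
  have hv : v ≠ 0 := by
    rw [← NNReal.coe_ne_zero]; exact pow_ne_zero 2 hσ
  change (Measure.pi fun i => gaussianReal (x i + δ i) v).map _ =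
    ((Measure.pi fun i => gaussianReal (x i) v).map _).withDensity _
  rw [Measure.pi_withDensity _ _ _ (fun i => by fun_prop)
    (fun i => gaussianReal_add_eq_withDensity (x i) (δ i) hv),
    ← MeasurableEquiv.map_withDensity_comp]
  congr 2
  funext y
  rw [Function.comp_apply, ← ENNReal.ofReal_prod_of_nonneg (fun i _ => (Real.exp_pos _).le),
    ← Real.exp_sum, ← Finset.sum_div, EuclideanSpace.real_norm_sq_eq]
  congr 3
  simp only [PiLp.inner_apply, RCLike.inner_apply, conj_trivial, MeasurableEquiv.coe_toLp, mul_sub,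
    Finset.sum_sub_distrib, ← Finset.sum_div, mul_comm (y _), mul_comm (x _)]

/-- Neyman–Pearson lower bound: if `N(x, σ²I)(A) ≥ Φ(a)` then
`N(x + δ, σ²I)(A) ≥ Φ(a − ‖δ‖₂/σ)`. -/
theorem gaussian_shift_lower_bound (m : ℕ) (σ : ℝ) (hσ : 0 < σ)
    (x δ : EuclideanSpace ℝ (Fin m)) (a : ℝ)
    (A : Set (EuclideanSpace ℝ (Fin m))) (hA : MeasurableSet A)
    (h : ENNReal.ofReal (Phi a) ≤ gaussPi m σ x A) :
    ENNReal.ofReal (Phi (a - ‖δ‖ / σ)) ≤ gaussPi m σ (x + δ) A := by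
  rcases eq_or_ne δ 0 with rfl | hδ
  · simpa using h
  have hδ' : 0 < ‖δ‖ := norm_pos_iff.2 hδ
  set s := ⟪δ, x⟫ + σ * ‖δ‖ * a
  have hH : gaussPi m σ x {y | ⟪δ, y⟫ ≤ s} = ENNReal.ofReal (Phi a) := by
    rw [gaussPi_setOf_inner_le hσ x hδ]
    congr 2
    field_simp
    ring
  have hH' : gaussPi m σ (x + δ) {y | ⟪δ, y⟫ ≤ s} = ENNReal.ofReal (Phi (a - ‖δ‖ / σ)) := by
    rw [gaussPi_setOf_inner_le hσ _ hδ, inner_add_right, real_inner_self_eq_norm_sq]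
    congr 2
    field_simp
    ring
  have hratio : Monotone fun t => ENNReal.ofReal (Real.exp ((t - ⟪δ, x⟫ - ‖δ‖ ^ 2 / 2) / σ ^ 2)) :=
    fun t t' htt' => ENNReal.ofReal_le_ofReal (Real.exp_le_exp.2 (by gcongr))
  rw [← hH', gaussPi_add_eq_withDensity hσ.ne']
  exact withDensity_setOf_le_le_of_monotone (φ := fun y => ⟪δ, y⟫) (by fun_prop) hratio s hA
    (hH ▸ h)
end

section
/- (Superuniformity of the one-sided binomial p-value.) Fix n ∈ ℕ, a threshold τ ∈ [0,1], and a true success probability p ∈ [0,1] with p ≤ τ (the null hypothesis). Let X be distributed Binomial(n, p), and define the p-value pv(x) = T(n, τ, x) for x ∈ {0,…,n}, where T(n, τ, x) is the Binomial(n, τ) upper tail at x. Then for every u ∈ [0,1], P(pv(X) ≤ u) ≤ u. -/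
/-!
The tail `T(n, p, k)` is nondecreasing in `p`: by Pascal's rule
`T(n+1, p, k+1) = p T(n, p, k) + (1 - p) T(n, p, k+1)` is a mixture of two tails of which the
first is the larger, so raising `p` shifts weight onto it, and induction on `n` does the rest.
If `k` is the least point of the rejection region `{x ≤ n | T(n, τ, x) ≤ u}`, the region lies in
`[k, n]`, so its probability under `Binomial(n, p)` is at most `T(n, p, k) ≤ T(n, τ, k) ≤ u`.
-/

/-- The binomial upper tail `T(n, p, k) = Σ_{j=k}^{n} C(n,j) p^j (1−p)^{n−j}`. -/
noncomputable def binomTail (n : ℕ) (p : ℝ) (k : ℕ) : ℝ :=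
  ∑ j ∈ Finset.Icc k n, (n.choose j : ℝ) * p ^ j * (1 - p) ^ (n - j)

/-- The binomial probability mass `P(X = j) = C(n,j) p^j (1−p)^{n−j}` for
`X ~ Binomial(n, p)`. -/
noncomputable def binomProb (n : ℕ) (p : ℝ) (j : ℕ) : ℝ :=
  (n.choose j : ℝ) * p ^ j * (1 - p) ^ (n - j)

section Binomial

variable {n : ℕ} {p τ : ℝ}

lemma binomTail_eq_sum_binomProb (n : ℕ) (p : ℝ) (k : ℕ) :
    binomTail n p k = ∑ j ∈ Finset.Icc k n, binomProb n p j := rfl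

lemma binomProb_nonneg (hp0 : 0 ≤ p) (hp1 : p ≤ 1) (j : ℕ) : 0 ≤ binomProb n p j := by
  unfold binomProb
  have : 0 ≤ 1 - p := sub_nonneg.2 hp1
  positivity

lemma binomProb_of_lt {j : ℕ} (hj : n < j) (p : ℝ) : binomProb n p j = 0 := by
  simp [binomProb, Nat.choose_eq_zero_of_lt hj]

lemma binomProb_succ_succ (n j : ℕ) (p : ℝ) :
    binomProb (n + 1) p (j + 1) = p * binomProb n p j + (1 - p) * binomProb n p (j + 1) := by
  obtain hjn | rfl | hnj := lt_trichotomy j n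
  · simp only [binomProb, Nat.choose_succ_succ, Nat.succ_sub_succ, Nat.cast_add,
      show n - j = n - (j + 1) + 1 by omega]
    ring
  · simp [binomProb, pow_succ, mul_comm]
  · simp [binomProb_of_lt hnj, binomProb_of_lt (Nat.succ_lt_succ hnj),
      binomProb_of_lt (Nat.lt_succ_of_lt hnj)]

lemma binomTail_eq_sum_Icc_of_le {m : ℕ} (hnm : n ≤ m) (p : ℝ) (k : ℕ) :
    binomTail n p k = ∑ j ∈ Finset.Icc k m, binomProb n p j :=
  Finset.sum_subset (Finset.Icc_subset_Icc_right hnm) fun _ hj hjn =>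
    binomProb_of_lt (by simp only [Finset.mem_Icc] at hj hjn; omega) p

lemma binomTail_zero (n : ℕ) (p : ℝ) : binomTail n p 0 = 1 := by
  rw [binomTail, ← Nat.range_succ_eq_Icc_zero]
  simpa [mul_assoc, mul_comm, mul_left_comm] using (add_pow p (1 - p) n).symm

lemma binomTail_succ_succ (n k : ℕ) (p : ℝ) :
    binomTail (n + 1) p (k + 1) = p * binomTail n p k + (1 - p) * binomTail n p (k + 1) := by
  have shift (f : ℕ → ℝ) :
      ∑ j ∈ Finset.Icc (k + 1) (n + 1), f j = ∑ i ∈ Finset.Icc k n, f (i + 1) := by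
    rw [← Finset.map_add_right_Icc k n 1, Finset.sum_map]
    rfl
  rw [binomTail_eq_sum_binomProb, shift, binomTail_eq_sum_binomProb,
    binomTail_eq_sum_Icc_of_le n.le_succ, shift, Finset.mul_sum, Finset.mul_sum,
    ← Finset.sum_add_distrib]
  exact Finset.sum_congr rfl fun j _ => binomProb_succ_succ n j p

lemma binomTail_antitone (hp0 : 0 ≤ p) (hp1 : p ≤ 1) : Antitone (binomTail n p) :=
  antitone_nat_of_succ_le fun k =>
    Finset.sum_le_sum_of_subset_of_nonneg (Finset.Icc_subset_Icc_left k.le_succ)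
      fun j _ _ => binomProb_nonneg hp0 hp1 j

lemma binomTail_mono_prob (hp0 : 0 ≤ p) (hpτ : p ≤ τ) (hτ1 : τ ≤ 1) (k : ℕ) :
    binomTail n p k ≤ binomTail n τ k := by
  induction n generalizing k with
  | zero => cases k <;> simp [binomTail]
  | succ n ih =>
    cases k with
    | zero => rw [binomTail_zero, binomTail_zero]
    | succ k =>
      have h_anti := binomTail_antitone (n := n) hp0 (hpτ.trans hτ1) k.le_succ
      rw [binomTail_succ_succ, binomTail_succ_succ]
      calc p * binomTail n p k + (1 - p) * binomTail n p (k + 1)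
          ≤ τ * binomTail n p k + (1 - τ) * binomTail n p (k + 1) := by
            linarith [mul_nonneg (sub_nonneg.2 hpτ) (sub_nonneg.2 h_anti)]
        _ ≤ τ * binomTail n τ k + (1 - τ) * binomTail n τ (k + 1) := by
          have hτ0 : 0 ≤ τ := hp0.trans hpτ
          have hτ1' : 0 ≤ 1 - τ := sub_nonneg.2 hτ1
          gcongr <;> exact ih _

end Binomial

/-- Superuniformity of the one-sided binomial p-value: if `X ~ Binomial(n, p)` with
`p ≤ τ` (the null hypothesis) and the p-value is `pv(x) = T(n, τ, x)`, then for every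
`u ∈ [0,1]` we have `P(pv(X) ≤ u) ≤ u`. -/
theorem binomial_pvalue_superuniform (n : ℕ) (τ p : ℝ)
    (hτ : τ ∈ Set.Icc (0 : ℝ) 1) (hp0 : 0 ≤ p) (hpτ : p ≤ τ)
    (u : ℝ) (hu : u ∈ Set.Icc (0 : ℝ) 1) :
    ∑ x ∈ (Finset.range (n + 1)).filter (fun x => binomTail n τ x ≤ u),
      binomProb n p x ≤ u := by
  set S := (Finset.range (n + 1)).filter (fun x => binomTail n τ x ≤ u)
  rcases S.eq_empty_or_nonempty with hS | hS
  · simpa [hS] using hu.1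
  have hkS : S.min' hS ∈ S := S.min'_mem hS
  have hS_sub : S ⊆ Finset.Icc (S.min' hS) n := fun x hx =>
    Finset.mem_Icc.2 ⟨S.min'_le x hx,
      Nat.lt_succ_iff.1 (Finset.mem_range.1 (Finset.mem_filter.1 hx).1)⟩
  calc ∑ x ∈ S, binomProb n p x
      ≤ binomTail n p (S.min' hS) :=
        Finset.sum_le_sum_of_subset_of_nonneg hS_sub
          fun j _ _ => binomProb_nonneg hp0 (hpτ.trans hτ.2) j
    _ ≤ binomTail n τ (S.min' hS) := binomTail_mono_prob hp0 hpτ hτ.2 _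
    _ ≤ u := (Finset.mem_filter.1 hkS).2
end
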